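/- Fix N ≥ 2. If a 2^N×2^N complex matrix A commutes with each of the five matrices H_S, σ₊^{(1)}, σ₋^{(1)}, σ₊^{(N)}, σ₋^{(N)}, then A is a scalar multiple of the identity: there exists λ ∈ ℂ with A = λI. -/

import Mathlib

open Matrix Complex Filter
open scoped Kronecker Topology ComplexOrder

noncomputable section

/-- The `N`-spin configuration space index: `(ℂ²)^{⊗N}` is identified with
functions `Fin N → Fin 2 → ℂ`, so `2^N × 2^N` matrices are indexed by `Fin N → Fin 2`. -/
abbrev Spin (N : ℕ) := Fin N → Fin 2

def sx : Matrix (Fin 2) (Fin 2) ℂ := !![0, 1; 1, 0]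
def sy : Matrix (Fin 2) (Fin 2) ℂ := !![0, -Complex.I; Complex.I, 0]
def sz : Matrix (Fin 2) (Fin 2) ℂ := !![1, 0; 0, -1]
def sp : Matrix (Fin 2) (Fin 2) ℂ := !![0, 1; 0, 0]
def sm : Matrix (Fin 2) (Fin 2) ℂ := !![0, 0; 1, 0]
def np : Matrix (Fin 2) (Fin 2) ℂ := !![1, 0; 0, 0]
def nm : Matrix (Fin 2) (Fin 2) ℂ := !![0, 0; 0, 1]

/-- `M^{(k)} = I ⊗ ... ⊗ M ⊗ ... ⊗ I`: the 2×2 matrix `M` acting at site `k`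
of the chain, under the iterated Kronecker identification. -/
def site {N : ℕ} (k : Fin N) (M : Matrix (Fin 2) (Fin 2) ℂ) :
    Matrix (Spin N) (Spin N) ℂ :=
  Matrix.of fun x y => ∏ j : Fin N, if j = k then M (x j) (y j) else if x j = y j then 1 else 0

/-- The XY spin-chain Hamiltonian
`H_S = Σ_{k=1}^N σz^{(k)} + Σ_{k=1}^{N-1} (σx^{(k)}σx^{(k+1)} + σy^{(k)}σy^{(k+1)})`. -/
def HS (N : ℕ) : Matrix (Spin N) (Spin N) ℂ :=
  (∑ k : Fin N, site k sz) +
    ∑ k : Fin N, ∑ l : Fin N,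
      if (l : ℕ) = (k : ℕ) + 1 then site k sx * site l sx + site k sy * site l sy else 0

/-- `β₀ = e^{-β}/(e^{-β}+e^{β})`. -/
def b0 (β : ℝ) : ℝ := Real.exp (-β) / (Real.exp (-β) + Real.exp β)

/-- `β₁ = e^{β}/(e^{-β}+e^{β})`. -/
def b1 (β : ℝ) : ℝ := Real.exp β / (Real.exp (-β) + Real.exp β)

/-- The single-spin Gibbs state `ρ_β = diag(β₀, β₁)`. -/
def rhoB (β : ℝ) : Matrix (Fin 2) (Fin 2) ℂ := !![(b0 β : ℂ), 0; 0, (b1 β : ℂ)]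

/-- Heisenberg-picture dissipator at site `k`, inverse temperature `β`:
`2β₀(2σ₋^{(k)}Xσ₊^{(k)} − {n₋^{(k)},X}) + 2β₁(2σ₊^{(k)}Xσ₋^{(k)} − {n₊^{(k)},X})`. -/
def dissAt {N : ℕ} (k : Fin N) (β : ℝ) (X : Matrix (Spin N) (Spin N) ℂ) :
    Matrix (Spin N) (Spin N) ℂ :=
  (2 * b0 β : ℂ) • (2 • (site k sm * X * site k sp) - (site k nm * X + X * site k nm)) +
    (2 * b1 β : ℂ) • (2 • (site k sp * X * site k sm) - (site k np * X + X * site k np))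

/-- Schrödinger-picture (adjoint) dissipator at site `k`:
`2β₀(2σ₊^{(k)}ρσ₋^{(k)} − {n₋^{(k)},ρ}) + 2β₁(2σ₋^{(k)}ρσ₊^{(k)} − {n₊^{(k)},ρ})`. -/
def dissStarAt {N : ℕ} (k : Fin N) (β : ℝ) (ρ : Matrix (Spin N) (Spin N) ℂ) :
    Matrix (Spin N) (Spin N) ℂ :=
  (2 * b0 β : ℂ) • (2 • (site k sp * ρ * site k sm) - (site k nm * ρ + ρ * site k nm)) +
    (2 * b1 β : ℂ) • (2 • (site k sm * ρ * site k sp) - (site k np * ρ + ρ * site k np))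

/-- The two-bath Lindblad generator (Heisenberg picture), baths at sites `k` and `l`. -/
def Ltwo {N : ℕ} (k l : Fin N) (β β' : ℝ) (X : Matrix (Spin N) (Spin N) ℂ) :
    Matrix (Spin N) (Spin N) ℂ :=
  Complex.I • (HS N * X - X * HS N) + dissAt k β X + dissAt l β' X

/-- The two-bath adjoint Lindblad generator, baths at sites `k` and `l`. -/
def LtwoStar {N : ℕ} (k l : Fin N) (β β' : ℝ) (ρ : Matrix (Spin N) (Spin N) ℂ) :
    Matrix (Spin N) (Spin N) ℂ :=
  (-Complex.I) • (HS N * ρ - ρ * HS N) + dissStarAt k β ρ + dissStarAt l β' ρ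

/-- The `N`-fold Kronecker product `ρ_β ⊗ ... ⊗ ρ_β` under the iterated-Kronecker
identification. -/
def prodState (N : ℕ) (β : ℝ) : Matrix (Spin N) (Spin N) ℂ :=
  Matrix.of fun x y => ∏ j : Fin N, rhoB β (x j) (y j)

/-- A density matrix: Hermitian positive semidefinite with trace 1. -/
def IsDensityMatrix {n : Type*} [Fintype n] [DecidableEq n] (ρ : Matrix n n ℂ) : Prop :=
  ρ.IsHermitian ∧ ρ.PosSemidef ∧ ρ.trace = 1


/-! The centralizer `S` of `A` is a subalgebra containing `H_S`, and it contains every one-site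
operator at the first site because `σ₊` and `σ₋` generate `M₂(ℂ)`. If `S` contains all one-site
operators at sites `≤ k`, then `[H_S, σ±^{(k)}] ∈ S`; every term of `H_S` either lives on sites
`≤ k` or commutes with `σ±^{(k)}`, except the coupling `σx^{(k)}σx^{(k+1)} + σy^{(k)}σy^{(k+1)}`,
whose commutator with `σ±^{(k)}` is `∓2 σz^{(k)} σ±^{(k+1)}`. As `σz^{(k)}` is an involution in `S`,
this puts `σ±^{(k+1)}`, hence all one-site operators at site `k + 1`, in `S`. Matrix units are
products of one-site operators, so `S` is everything, `A` is central, and central matrices are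
scalar. -/

namespace Matrix

variable {ι n R : Type*} [Fintype ι] [CommSemiring R]

def piKron (f : ι → Matrix n n R) : Matrix (ι → n) (ι → n) R :=
  of fun x y => ∏ i, f i (x i) (y i)

@[simp]
theorem piKron_apply (f : ι → Matrix n n R) (x y : ι → n) :
    piKron f x y = ∏ i, f i (x i) (y i) := rfl

theorem piKron_mul [DecidableEq ι] [Fintype n] (f g : ι → Matrix n n R) :
    piKron (f * g) = piKron f * piKron g := by
  ext x y
  simp only [piKron_apply, Pi.mul_apply, mul_apply, Finset.prod_univ_sum,
    Fintype.piFinset_univ, Finset.prod_mul_distrib]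

theorem piKron_one [DecidableEq n] : piKron (1 : ι → Matrix n n R) = 1 := by
  ext x y
  simp only [piKron_apply, Pi.one_apply, one_apply, Finset.prod_ite_zero, Finset.prod_const_one,
    Finset.mem_univ, true_implies, funext_iff]

def piKronHom [DecidableEq ι] [Fintype n] [DecidableEq n] :
    (ι → Matrix n n R) →* Matrix (ι → n) (ι → n) R where
  toFun := piKron
  map_one' := piKron_one
  map_mul' := piKron_mul

theorem piKron_single [DecidableEq n] (u v : ι → n) :
    piKron (fun i => single (u i) (v i) (1 : R)) = single u v 1 := by
  ext x y
  simp only [piKron_apply, single_apply, Finset.prod_ite_zero, Finset.prod_const_one,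
    Finset.mem_univ, true_implies, funext_iff, ← forall_and]

end Matrix

theorem mem_of_sum_mem_of_forall_ne {ι M σ : Type*} [Fintype ι] [DecidableEq ι] [AddCommGroup M]
    [SetLike σ M] [AddSubgroupClass σ M] {S : σ} {f : ι → M} (i : ι)
    (hsum : ∑ j, f j ∈ S) (hf : ∀ j ≠ i, f j ∈ S) : f i ∈ S := by
  rw [← Finset.add_sum_erase _ _ (Finset.mem_univ i)] at hsum
  exact (add_mem_cancel_right (sum_mem fun j hj => hf j (Finset.ne_of_mem_erase hj))).mp hsum

theorem Subalgebra.lie_mem_of_mem_or_commute {R A : Type*} [CommRing R] [Ring A] [Algebra R A]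
    {S : Subalgebra R A} {X C : A} (hC : C ∈ S) (hX : X ∈ S ∨ Commute X C) : ⁅X, C⁆ ∈ S := by
  rcases hX with hX | hX
  · rw [Ring.lie_def]
    exact sub_mem (mul_mem hX hC) (mul_mem hC hX)
  · rw [hX.lie_eq]
    exact zero_mem S

theorem adjoin_sp_sm : Algebra.adjoin ℂ {sp, sm} = ⊤ := by
  set T := Algebra.adjoin ℂ {sp, sm}
  have hsp : sp ∈ T := Algebra.subset_adjoin (by simp)
  have hsm : sm ∈ T := Algebra.subset_adjoin (by simp)
  refine Algebra.eq_top_iff.2 fun M => ?_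
  have hM : M = M 0 0 • (sp * sm) + M 0 1 • sp + M 1 0 • sm + M 1 1 • (sm * sp) := by
    ext i j
    fin_cases i <;> fin_cases j <;> simp [sp, sm]
  rw [hM]
  exact add_mem (add_mem (add_mem (T.smul_mem (mul_mem hsp hsm) _) (T.smul_mem hsp _))
    (T.smul_mem hsm _)) (T.smul_mem (mul_mem hsm hsp) _)

theorem sz_mul_sz : sz * sz = 1 := by
  ext i j
  fin_cases i <;> fin_cases j <;> simp [sz, one_apply]

theorem lie_sx_sp : ⁅sx, sp⁆ = -sz := by
  ext i j
  fin_cases i <;> fin_cases j <;> simp [Ring.lie_def, sx, sp, sz]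

theorem lie_sy_sp : ⁅sy, sp⁆ = -I • sz := by
  ext i j
  fin_cases i <;> fin_cases j <;> simp [Ring.lie_def, sy, sp, sz]

theorem lie_sx_sm : ⁅sx, sm⁆ = sz := by
  ext i j
  fin_cases i <;> fin_cases j <;> simp [Ring.lie_def, sx, sm, sz]

theorem lie_sy_sm : ⁅sy, sm⁆ = -I • sz := by
  ext i j
  fin_cases i <;> fin_cases j <;> simp [Ring.lie_def, sy, sm, sz]

theorem sx_add_I_smul_sy : sx + I • sy = (2 : ℂ) • sp := by
  ext i j
  fin_cases i <;> fin_cases j <;> norm_num [sx, sy, sp]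

theorem sx_sub_I_smul_sy : sx - I • sy = (2 : ℂ) • sm := by
  ext i j
  fin_cases i <;> fin_cases j <;> norm_num [sx, sy, sm]

section SiteOperators

variable {N : ℕ}

theorem site_eq_piKron (k : Fin N) (M : Matrix (Fin 2) (Fin 2) ℂ) :
    site k M = piKron (Pi.mulSingle k M) := by
  ext x y
  simp only [site, of_apply, piKron_apply]
  refine Finset.prod_congr rfl fun j _ => ?_
  by_cases h : j = k
  · subst h; simp
  · simp [h, one_apply]

theorem site_apply (k : Fin N) (M : Matrix (Fin 2) (Fin 2) ℂ) (x y : Spin N) :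
    site k M x y = M (x k) (y k) * ∏ j ∈ Finset.univ.erase k, if x j = y j then 1 else 0 := by
  rw [site, of_apply, ← Finset.mul_prod_erase _ _ (Finset.mem_univ k), if_pos rfl]
  congr 1
  exact Finset.prod_congr rfl fun j hj => if_neg (Finset.ne_of_mem_erase hj)

def siteAlgHom (k : Fin N) : Matrix (Fin 2) (Fin 2) ℂ →ₐ[ℂ] Matrix (Spin N) (Spin N) ℂ :=
  AlgHom.ofLinearMap
    { toFun := site k
      map_add' := fun M M' => by ext x y; simp only [site_apply, Matrix.add_apply, add_mul]
      map_smul' := fun c M => by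
        ext x y
        simp only [site_apply, Matrix.smul_apply, smul_eq_mul, RingHom.id_apply, mul_assoc] }
    (by simp [site_eq_piKron, piKron_one])
    fun M M' => by
      simp only [LinearMap.coe_mk, AddHom.coe_mk, site_eq_piKron]
      rw [Pi.mulSingle_mul, piKron_mul]

@[simp] theorem site_mul (k : Fin N) (M M' : Matrix (Fin 2) (Fin 2) ℂ) :
    site k (M * M') = site k M * site k M' := map_mul (siteAlgHom k) M M'

@[simp] theorem site_one (k : Fin N) : site k (1 : Matrix (Fin 2) (Fin 2) ℂ) = 1 :=
  map_one (siteAlgHom k)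

@[simp] theorem site_add (k : Fin N) (M M' : Matrix (Fin 2) (Fin 2) ℂ) :
    site k (M + M') = site k M + site k M' := map_add (siteAlgHom k) M M'

@[simp] theorem site_sub (k : Fin N) (M M' : Matrix (Fin 2) (Fin 2) ℂ) :
    site k (M - M') = site k M - site k M' := map_sub (siteAlgHom k) M M'

@[simp] theorem site_neg (k : Fin N) (M : Matrix (Fin 2) (Fin 2) ℂ) :
    site k (-M) = -site k M := map_neg (siteAlgHom k) M

@[simp] theorem site_smul (k : Fin N) (c : ℂ) (M : Matrix (Fin 2) (Fin 2) ℂ) :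
    site k (c • M) = c • site k M := map_smul (siteAlgHom k) c M

theorem site_commute {k l : Fin N} (h : k ≠ l) (M M' : Matrix (Fin 2) (Fin 2) ℂ) :
    Commute (site k M) (site l M') := by
  rw [site_eq_piKron, site_eq_piKron]
  exact (Pi.mulSingle_commute h M M').map piKronHom

theorem lie_site_site (k : Fin N) (M M' : Matrix (Fin 2) (Fin 2) ℂ) :
    ⁅site k M, site k M'⁆ = site k ⁅M, M'⁆ := by
  simp only [Ring.lie_def, site_sub, site_mul]

theorem lie_site_mul_site_site {k l : Fin N} (h : k ≠ l) (X Y Z : Matrix (Fin 2) (Fin 2) ℂ) :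
    ⁅site k X * site l Y, site k Z⁆ = site k ⁅X, Z⁆ * site l Y := by
  rw [Ring.lie_def, mul_assoc, ← (site_commute h Z Y).eq, ← mul_assoc, ← mul_assoc, ← sub_mul,
    ← Ring.lie_def, lie_site_site]

def xyCoupling (k l : Fin N) : Matrix (Spin N) (Spin N) ℂ :=
  site k sx * site l sx + site k sy * site l sy

theorem lie_xyCoupling_site_sp {k l : Fin N} (h : k ≠ l) :
    ⁅xyCoupling k l, site k sp⁆ = (-2 : ℂ) • (site k sz * site l sp) := by
  have hsp : site l sp = (2 : ℂ)⁻¹ • (site l sx + I • site l sy) := by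
    rw [← site_smul, ← site_add, sx_add_I_smul_sy, site_smul, smul_smul]; norm_num
  rw [xyCoupling, Ring.lie_def, add_mul, mul_add, add_sub_add_comm, ← Ring.lie_def,
    ← Ring.lie_def, lie_site_mul_site_site h, lie_site_mul_site_site h, lie_sx_sp, lie_sy_sp, hsp]
  simp only [site_neg, site_smul, neg_mul, smul_mul_assoc, mul_add, mul_smul_comm, smul_add,
    smul_smul]
  module

theorem lie_xyCoupling_site_sm {k l : Fin N} (h : k ≠ l) :
    ⁅xyCoupling k l, site k sm⁆ = (2 : ℂ) • (site k sz * site l sm) := by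
  have hsm : site l sm = (2 : ℂ)⁻¹ • (site l sx - I • site l sy) := by
    rw [← site_smul, ← site_sub, sx_sub_I_smul_sy, site_smul, smul_smul]; norm_num
  rw [xyCoupling, Ring.lie_def, add_mul, mul_add, add_sub_add_comm, ← Ring.lie_def,
    ← Ring.lie_def, lie_site_mul_site_site h, lie_site_mul_site_site h, lie_sx_sm, lie_sy_sm, hsm]
  simp only [site_smul, smul_mul_assoc, mul_sub, mul_smul_comm, smul_sub, smul_smul]
  module

theorem HS_eq_sum_site_add_sum_xyCoupling : HS N = ∑ j, site j sz +
    ∑ p : Fin N × Fin N, if (p.2 : ℕ) = p.1 + 1 then xyCoupling p.1 p.2 else 0 := by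
  rw [Fintype.sum_prod_type]
  rfl

end SiteOperators

section Subalgebra

variable {N : ℕ} {S : Subalgebra ℂ (Matrix (Spin N) (Spin N) ℂ)}

theorem site_mem_of_sp_mem_of_sm_mem {k : Fin N} (hp : site k sp ∈ S) (hm : site k sm ∈ S)
    (M : Matrix (Fin 2) (Fin 2) ℂ) : site k M ∈ S := by
  have h : Algebra.adjoin ℂ {sp, sm} ≤ S.comap (siteAlgHom k) :=
    Algebra.adjoin_le (Set.insert_subset_iff.2 ⟨hp, Set.singleton_subset_iff.2 hm⟩)
  exact h (adjoin_sp_sm ▸ Algebra.mem_top)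

theorem site_mem_of_smul_site_sz_mul_mem {k l : Fin N} (hsz : site k sz ∈ S) {c : ℂ} (hc : c ≠ 0)
    {M : Matrix (Fin 2) (Fin 2) ℂ} (h : c • (site k sz * site l M) ∈ S) : site l M ∈ S := by
  have hsz2 : site k sz * site k sz = 1 := by rw [← site_mul, sz_mul_sz, site_one]
  have h' := mul_mem hsz (S.smul_mem h c⁻¹)
  rwa [inv_smul_smul₀ hc, ← mul_assoc, hsz2, one_mul] at h'

theorem xyCoupling_mem_or_commute_site {k j j' : Fin N} (hle : ∀ i ≤ k, ∀ M, site i M ∈ S)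
    (hjj' : (j' : ℕ) = j + 1) (hjk : j ≠ k) (Z : Matrix (Fin 2) (Fin 2) ℂ) :
    xyCoupling j j' ∈ S ∨ Commute (xyCoupling j j') (site k Z) := by
  rcases hjk.lt_or_gt with hlt | hgt
  · have hj' : j' ≤ k := Fin.le_def.2 (by rw [Fin.lt_def] at hlt; omega)
    exact .inl (add_mem (mul_mem (hle j hlt.le _) (hle j' hj' _))
      (mul_mem (hle j hlt.le _) (hle j' hj' _)))
  · have hj' : j' ≠ k := Fin.ne_of_val_ne (by rw [Fin.lt_def] at hgt; omega)
    exact .inr (((site_commute hgt.ne' _ _).mul_left (site_commute hj' _ _)).add_left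
      ((site_commute hgt.ne' _ _).mul_left (site_commute hj' _ _)))

theorem lie_xyCoupling_mem (hH : HS N ∈ S) {k l : Fin N} (hkl : (l : ℕ) = k + 1)
    (hle : ∀ j ≤ k, ∀ M, site j M ∈ S) (Z : Matrix (Fin 2) (Fin 2) ℂ) :
    ⁅xyCoupling k l, site k Z⁆ ∈ S := by
  set C := site k Z
  have hC : C ∈ S := hle k le_rfl Z
  set T : Fin N × Fin N → Matrix (Spin N) (Spin N) ℂ :=
    fun p => if (p.2 : ℕ) = p.1 + 1 then xyCoupling p.1 p.2 else 0
  have hT : ∀ p ≠ (k, l), T p ∈ S ∨ Commute (T p) C := by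
    rintro ⟨j, j'⟩ hp
    by_cases hjj' : (j' : ℕ) = j + 1
    · have hjk : j ≠ k := by
        rintro rfl
        exact hp (by rw [Fin.ext (hjj'.trans hkl.symm : (j' : ℕ) = l)])
      simpa only [T, if_pos hjj'] using xyCoupling_mem_or_commute_site hle hjj' hjk Z
    · simp only [T, if_neg hjj']
      exact .inl (zero_mem S)
  have hsum : ∑ p, ⁅T p, C⁆ ∈ S := by
    have e : ∑ p, ⁅T p, C⁆ = ⁅HS N, C⁆ - ∑ j : Fin N, ⁅site j sz, C⁆ := by
      simp only [HS_eq_sum_site_add_sum_xyCoupling, Ring.lie_def, Finset.sum_sub_distrib,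
        ← Finset.sum_mul, ← Finset.mul_sum, add_mul, mul_add, T]
      abel
    have hsite (j : Fin N) : site j sz ∈ S ∨ Commute (site j sz) C :=
      (le_or_gt j k).imp (hle j · sz) fun hj => site_commute hj.ne' sz Z
    rw [e]
    exact sub_mem (Subalgebra.lie_mem_of_mem_or_commute hC (.inl hH))
      (sum_mem fun j _ => Subalgebra.lie_mem_of_mem_or_commute hC (hsite j))
  have hkl' := mem_of_sum_mem_of_forall_ne (k, l) hsum
    fun p hp => Subalgebra.lie_mem_of_mem_or_commute hC (hT p hp)
  simpa only [T, if_pos hkl] using hkl'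

theorem site_mem_of_succ (hH : HS N ∈ S) {k l : Fin N} (hkl : (l : ℕ) = k + 1)
    (hle : ∀ j ≤ k, ∀ M, site j M ∈ S) (M : Matrix (Fin 2) (Fin 2) ℂ) : site l M ∈ S := by
  have hne : k ≠ l := Fin.ne_of_val_ne (by omega)
  have hsz := hle k le_rfl sz
  refine site_mem_of_sp_mem_of_sm_mem ?_ ?_ M
  · refine site_mem_of_smul_site_sz_mul_mem hsz (by norm_num : (-2 : ℂ) ≠ 0) ?_
    exact lie_xyCoupling_site_sp hne ▸ lie_xyCoupling_mem hH hkl hle sp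
  · refine site_mem_of_smul_site_sz_mul_mem hsz (by norm_num : (2 : ℂ) ≠ 0) ?_
    exact lie_xyCoupling_site_sm hne ▸ lie_xyCoupling_mem hH hkl hle sm

theorem site_mem_of_site_zero_mem (hH : HS N ∈ S) (hN : 0 < N)
    (h0 : ∀ M, site ⟨0, hN⟩ M ∈ S) (j : Fin N) (M : Matrix (Fin 2) (Fin 2) ℂ) : site j M ∈ S := by
  suffices ∀ n : ℕ, ∀ j : Fin N, (j : ℕ) ≤ n → ∀ M, site j M ∈ S from this j j le_rfl M
  intro n
  induction n with
  | zero =>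
    intro j hj
    rw [show j = ⟨0, hN⟩ from Fin.ext (Nat.le_zero.1 hj)]
    exact h0
  | succ n ih =>
    intro j hj
    rcases Nat.lt_or_eq_of_le hj with hlt | heq
    · exact ih j (by omega)
    · exact site_mem_of_succ hH (k := ⟨n, by omega⟩) heq fun i hi => ih i hi

theorem piKron_mem_of_forall_site_mem {f : Fin N → Matrix (Fin 2) (Fin 2) ℂ}
    (h : ∀ j, site j (f j) ∈ S) : piKron f ∈ S := by
  have e := Finset.map_noncommProd Finset.univ (fun i => Pi.mulSingle i (f i))
    (fun i _ j _ _ => Pi.mulSingle_apply_commute f i j) piKronHom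
  rw [Finset.noncommProd_mulSingle f] at e
  change piKronHom f ∈ S
  rw [e]
  exact S.toSubmonoid.noncommProd_mem _ _ _ fun j _ =>
    (site_eq_piKron j (f j) ▸ h j : piKron _ ∈ S)

theorem eq_top_of_forall_site_mem (h : ∀ j M, site j M ∈ S) : S = ⊤ := by
  refine Algebra.eq_top_iff.2 fun X => ?_
  rw [matrix_eq_sum_single X]
  refine sum_mem fun u _ => sum_mem fun v _ => ?_
  rw [show single u v (X u v) = X u v • single u v 1 by rw [smul_single, smul_eq_mul, mul_one],
    ← piKron_single]
  exact S.smul_mem (piKron_mem_of_forall_site_mem fun j => h j _) _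

end Subalgebra

/-- The commutant of `{H_S, σ₊^{(1)}, σ₋^{(1)}, σ₊^{(N)}, σ₋^{(N)}}` is trivial. -/
theorem commutant_trivial (N : ℕ) (hN : 2 ≤ N)
    (A : Matrix (Spin N) (Spin N) ℂ)
    (h1 : A * HS N = HS N * A)
    (h2 : A * site (⟨0, by omega⟩ : Fin N) sp = site (⟨0, by omega⟩ : Fin N) sp * A)
    (h3 : A * site (⟨0, by omega⟩ : Fin N) sm = site (⟨0, by omega⟩ : Fin N) sm * A) :
    ∃ lam : ℂ, A = lam • (1 : Matrix (Spin N) (Spin N) ℂ) := by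
  have hmem {X} (h : A * X = X * A) : X ∈ Subalgebra.centralizer ℂ {A} := by
    simpa [Subalgebra.mem_centralizer_iff] using h
  have hsite := site_mem_of_site_zero_mem (hmem h1) _
    (site_mem_of_sp_mem_of_sm_mem (hmem h2) (hmem h3))
  have hA : A ∈ Set.center (Matrix (Spin N) (Spin N) ℂ) :=
    (Subalgebra.centralizer_eq_top_iff_subset ℂ).1 (eq_top_of_forall_site_mem hsite) rfl
  rw [Matrix.center_eq_range] at hA
  obtain ⟨c, rfl⟩ := hA
  exact ⟨c, (smul_one_eq_diagonal c).symm⟩
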